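/- arXiv:0801.2457 — 2 statements merged into one kernel-verified Lean document; each statement's English description precedes it below -/
import Mathlib

section
/- Let 0 < N < 1 and d > 0 with d² ≤ N⁻² − 1. Then F'(z) > 0 for every z in the open interval I₂ = (1, √(1+d²)), i.e. F is strictly increasing on I₂; equivalently, φ(z) < 0 and 1 − N·z > 0 throughout the interior of I₂. -/
/-- `F N d z = (1 - N z)² (1 - d²/(z² - 1))`. -/
noncomputable def F (N d z : ℝ) : ℝ := (1 - N * z) ^ 2 * (1 - d ^ 2 / (z ^ 2 - 1))

/-- `φ N d z = 1/d² + (1 - z/N)/(z² - 1)²`. -/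
noncomputable def phi (N d z : ℝ) : ℝ := 1 / d ^ 2 + (1 - z / N) / (z ^ 2 - 1) ^ 2

/-- The interval `I₂ = (1, √(1+d²))`. -/
noncomputable def I₂ (d : ℝ) : Set ℝ := Set.Ioo 1 (Real.sqrt (1 + d ^ 2))

/-!
Differentiating gives `F' = -2 N d² (1 - N z) φ`. On `I₂` the bound `z² < 1 + d² ≤ N⁻²`
gives `N z < 1`, and writing `u = z² - 1 ∈ (0, d²)`, the numerator `N u² + d² (N - z)` of `φ`
equals `-(N u (d² - u) + d² z (1 - N z))`, which is negative.
-/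

theorem hasDerivAt_F {N d z : ℝ} (hN : N ≠ 0) (hd : d ≠ 0) (hz : z ^ 2 - 1 ≠ 0) :
    HasDerivAt (F N d) (-(2 * N * d ^ 2 * (1 - N * z) * phi N d z)) z := by
  have hlin : HasDerivAt (fun z : ℝ => 1 - N * z) (-N) z := by
    simpa using ((hasDerivAt_id z).const_mul N).const_sub 1
  have hsq : HasDerivAt (fun z : ℝ => z ^ 2 - 1) (2 * z) z := by
    simpa using (hasDerivAt_pow 2 z).sub_const 1
  have hF : HasDerivAt (fun z => (1 - N * z) ^ 2 * (1 - d ^ 2 / (z ^ 2 - 1))) _ z :=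
    (hlin.fun_pow 2).fun_mul (((hasDerivAt_const z (d ^ 2)).fun_div hsq hz).const_sub 1)
  refine hF.congr_deriv ?_
  unfold phi
  field_simp
  ring

theorem mem_I₂_iff {d z : ℝ} : z ∈ I₂ d ↔ 1 < z ∧ z ^ 2 < 1 + d ^ 2 :=
  and_congr_right fun hz => Real.lt_sqrt (zero_le_one.trans hz.le)

theorem mul_lt_one_of_sq_lt {N z : ℝ} (hN : 0 < N) (hzN : z ^ 2 < 1 / N ^ 2) :
    N * z < 1 := by
  have hNz : (N * z) ^ 2 < 1 ^ 2 := by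
    rw [mul_pow, one_pow]
    rwa [lt_div_iff₀' (by positivity)] at hzN
  exact lt_of_pow_lt_pow_left₀ 2 zero_le_one hNz

theorem phi_neg {N d z : ℝ} (hN : 0 < N) (hd : 0 < d) (hz : 1 < z)
    (hzd : z ^ 2 < 1 + d ^ 2) (hNz : N * z < 1) : phi N d z < 0 := by
  have hu : 0 < z ^ 2 - 1 := by nlinarith
  have hnum : N * (z ^ 2 - 1) ^ 2 + d ^ 2 * (N - z) < 0 := by
    linarith [mul_pos (mul_pos hN hu) (sub_pos.2 (show z ^ 2 - 1 < d ^ 2 by linarith)),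
      mul_pos (mul_pos (pow_pos hd 2) (zero_lt_one.trans hz)) (sub_pos.2 hNz)]
  have hphi : phi N d z =
      (N * (z ^ 2 - 1) ^ 2 + d ^ 2 * (N - z)) / (N * d ^ 2 * (z ^ 2 - 1) ^ 2) := by
    unfold phi
    field_simp
  rw [hphi]
  exact div_neg_of_neg_of_pos hnum (by positivity)

theorem stmt_7_general (N d : ℝ) (hN : 0 < N) (hd : 0 < d)
    (hcase : d ^ 2 ≤ 1 / N ^ 2 - 1) :
    (∀ z ∈ I₂ d, 0 < deriv (F N d) z) ∧
    StrictMonoOn (F N d) (I₂ d) ∧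
    (∀ z ∈ I₂ d, phi N d z < 0 ∧ 0 < 1 - N * z) := by
  have hsign : ∀ z ∈ I₂ d, phi N d z < 0 ∧ 0 < 1 - N * z := by
    intro z hz
    obtain ⟨hz1, hzd⟩ := mem_I₂_iff.1 hz
    have hNz : N * z < 1 := mul_lt_one_of_sq_lt hN (by linarith)
    exact ⟨phi_neg hN hd hz1 hzd hNz, sub_pos.2 hNz⟩
  have hderiv : ∀ z ∈ I₂ d, HasDerivAt (F N d) (-(2 * N * d ^ 2 * (1 - N * z) * phi N d z)) z :=
    fun z hz => hasDerivAt_F hN.ne' hd.ne' (by nlinarith [(mem_I₂_iff.1 hz).1])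
  have hpos : ∀ z ∈ I₂ d, 0 < deriv (F N d) z := by
    intro z hz
    obtain ⟨hphi, hNz⟩ := hsign z hz
    rw [(hderiv z hz).deriv, neg_pos]
    exact mul_neg_of_pos_of_neg (mul_pos (by positivity) hNz) hphi
  refine ⟨hpos, ?_, hsign⟩
  refine strictMonoOn_of_deriv_pos (convex_Ioo _ _)
    (fun z hz => (hderiv z hz).continuousAt.continuousWithinAt) ?_
  rwa [interior_Ioo]

/-- If `0 < N < 1` and `d² ≤ N⁻² - 1` then `F' > 0` on `I₂` (`F` strictly increasing
there); equivalently `φ < 0` and `1 - N z > 0` throughout `I₂`. -/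
theorem stmt_7 (N d : ℝ) (hN : 0 < N) (hN1 : N < 1) (hd : 0 < d)
    (hcase : d ^ 2 ≤ 1 / N ^ 2 - 1) :
    (∀ z ∈ I₂ d, 0 < deriv (F N d) z) ∧
    StrictMonoOn (F N d) (I₂ d) ∧
    (∀ z ∈ I₂ d, phi N d z < 0 ∧ 0 < 1 - N * z) :=
  stmt_7_general N d hN hd hcase
end

section
/- (Proposition 1) Let 0 < N < 1 and d > 0 with d² ≤ N⁻² − 1. Then for every A > 0, the dispersion relation F(z) + A = 0 has exactly two real solutions z with z² ≠ 1: exactly one in the interval I₁ and exactly one in the interval I₂. -/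
/-- The interval `I₁ = (-√(1+d²), -1)`. -/
noncomputable def I₁ (d : ℝ) : Set ℝ := Set.Ioo (-Real.sqrt (1 + d ^ 2)) (-1)

open Filter Topology Set

theorem Set.InjOn.existsUnique_of_exists {α β : Type*} {f : α → β} {s : Set α} {y : β}
    (hf : InjOn f s) (h : ∃ x ∈ s, f x = y) : ∃! x, x ∈ s ∧ f x = y :=
  let ⟨x, hx, hfx⟩ := h
  ⟨x, ⟨hx, hfx⟩, fun _ ⟨hz, hfz⟩ => hf hz hx (hfz.trans hfx.symm)⟩

section Dispersion

variable {N d : ℝ}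

theorem F_neg (N d z : ℝ) : F N d (-z) = F (-N) d z := by
  simp only [F, neg_sq, mul_neg, neg_mul]

theorem neg_I₂ (d : ℝ) : -I₂ d = I₁ d := by
  rw [I₂, I₁, neg_Ioo]

theorem F_eq_neg_mul {z : ℝ} (hz₀ : z ≠ 0) (hz : z ^ 2 ≠ 1) :
    F N d z = -((z⁻¹ - N) ^ 2 * (z ^ 2 / (z ^ 2 - 1)) * (1 + d ^ 2 - z ^ 2)) := by
  have : z ^ 2 - 1 ≠ 0 := sub_ne_zero.2 hz
  unfold F
  field_simp
  ring

theorem F_sqrt_one_add_sq (hd : d ≠ 0) : F N d √(1 + d ^ 2) = 0 := by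
  have : √(1 + d ^ 2) ^ 2 - 1 = d ^ 2 := by rw [Real.sq_sqrt (by positivity)]; ring
  rw [F, this, div_self (pow_ne_zero 2 hd), sub_self, mul_zero]

theorem one_lt_sq_and_sq_lt_of_F_neg {z : ℝ} (hF : F N d z < 0) :
    1 < z ^ 2 ∧ z ^ 2 < 1 + d ^ 2 := by
  have hlt : 1 < d ^ 2 / (z ^ 2 - 1) := sub_neg.1 (neg_of_mul_neg_right hF (sq_nonneg _))
  have hpos : 0 < z ^ 2 - 1 := by
    by_contra! h
    linarith [div_nonpos_of_nonneg_of_nonpos (sq_nonneg d) h]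
  have := (one_lt_div hpos).1 hlt
  constructor <;> linarith

theorem mem_I₁_union_I₂_iff {z : ℝ} : z ∈ I₁ d ∪ I₂ d ↔ 1 < z ^ 2 ∧ z ^ 2 < 1 + d ^ 2 := by
  rw [one_lt_sq_iff_one_lt_abs, ← sq_abs, ← Real.lt_sqrt (abs_nonneg z), lt_abs, abs_lt]
  simp only [I₁, I₂, mem_union, mem_Ioo]
  have := Real.sqrt_nonneg (1 + d ^ 2)
  grind

theorem continuousOn_F : ContinuousOn (F N d) {z | z ^ 2 ≠ 1} :=
  (by fun_prop : Continuous fun z : ℝ => (1 - N * z) ^ 2).continuousOn.mul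
    (continuousOn_const.sub (continuousOn_const.div (by fun_prop) fun _ hz => sub_ne_zero.2 hz))

theorem tendsto_F_nhdsGT_one (hd : d ≠ 0) (hN : N ≠ 1) : Tendsto (F N d) (𝓝[>] 1) atBot := by
  have hsq : Tendsto (fun z : ℝ => z ^ 2 - 1) (𝓝[>] 1) (𝓝[>] 0) := by
    refine tendsto_nhdsWithin_iff.2 ⟨?_, eventually_nhdsWithin_of_forall fun z hz =>
      mem_Ioi.2 (sub_pos.2 (one_lt_pow₀ (mem_Ioi.1 hz) two_ne_zero))⟩
    have : Tendsto (fun z : ℝ => z ^ 2 - 1) (𝓝 1) (𝓝 (1 ^ 2 - 1)) :=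
      (continuous_pow 2 |>.sub continuous_const).tendsto 1
    simpa using this.mono_left nhdsWithin_le_nhds
  have hpole : Tendsto (fun z : ℝ => 1 - d ^ 2 / (z ^ 2 - 1)) (𝓝[>] 1) atBot := by
    simp only [sub_eq_add_neg, div_eq_mul_inv]
    exact tendsto_atBot_add_const_left _ 1 <| tendsto_neg_atTop_atBot.comp <|
      (tendsto_inv_nhdsGT_zero.comp hsq).const_mul_atTop (by positivity)
  have hfac : Tendsto (fun z : ℝ => (1 - N * z) ^ 2) (𝓝[>] 1) (𝓝 ((1 - N) ^ 2)) := by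
    have := (by fun_prop : Continuous fun z : ℝ => (1 - N * z) ^ 2).tendsto 1
    simpa using this.mono_left nhdsWithin_le_nhds
  exact hfac.pos_mul_atBot (sq_pos_of_ne_zero (sub_ne_zero.2 hN.symm)) hpole

theorem exists_mem_I₂_F_eq (hd : d ≠ 0) (hN : N ≠ 1) {y : ℝ} (hy : y < 0) :
    ∃ z ∈ I₂ d, F N d z = y := by
  have hs : 1 < √(1 + d ^ 2) :=
    (Real.lt_sqrt zero_le_one).2 (by rw [one_pow, lt_add_iff_pos_right]; positivity)
  obtain ⟨z₀, hz₀F, hz₀⟩ :=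
    ((tendsto_F_nhdsGT_one hd hN).eventually_lt_atBot y).and (Ioo_mem_nhdsGT hs) |>.exists
  have hcont : ContinuousOn (F N d) (Icc z₀ √(1 + d ^ 2)) :=
    continuousOn_F.mono fun z hz => by
      have := hz₀.1.trans_le hz.1
      exact ne_of_gt (by nlinarith)
  obtain ⟨z, hz, hFz⟩ := intermediate_value_Ioo hz₀.2.le hcont
    ⟨hz₀F, (F_sqrt_one_add_sq hd).symm ▸ hy⟩
  exact ⟨z, ⟨hz₀.1.trans hz.1, hz.2⟩, hFz⟩

theorem exists_mem_I₁_F_eq (hd : d ≠ 0) (hN : N ≠ -1) {y : ℝ} (hy : y < 0) :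
    ∃ z ∈ I₁ d, F N d z = y := by
  obtain ⟨z, hz, hFz⟩ := exists_mem_I₂_F_eq (N := -N) hd (by contrapose! hN; linarith) hy
  exact ⟨-z, neg_I₂ d ▸ neg_mem_neg.2 hz, by rwa [F_neg]⟩

theorem strictMonoOn_F_I₂ (hN : N * √(1 + d ^ 2) ≤ 1) : StrictMonoOn (F N d) (I₂ d) := by
  rintro a ⟨ha1, -⟩ b ⟨hb1, hbs⟩ hab
  have ha2 : 1 < a ^ 2 := one_lt_pow₀ ha1 two_ne_zero
  have hab2 : a ^ 2 < b ^ 2 := by gcongr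
  have hb2 : b ^ 2 < 1 + d ^ 2 := (Real.lt_sqrt (by linarith)).1 hbs
  have hNb : N ≤ b⁻¹ := by
    rw [← one_div, le_div_iff₀ (by linarith)]
    rcases le_or_gt 0 N with h | h
    · exact (mul_le_mul_of_nonneg_left hbs.le h).trans hN
    · nlinarith
  have hinv : b⁻¹ < a⁻¹ := inv_strictAnti₀ (by linarith) hab
  have hfac : (b⁻¹ - N) ^ 2 ≤ (a⁻¹ - N) ^ 2 := pow_le_pow_left₀ (sub_nonneg.2 hNb) (by linarith) 2
  have hpole : b ^ 2 / (b ^ 2 - 1) ≤ a ^ 2 / (a ^ 2 - 1) := by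
    rw [div_le_div_iff₀ (by linarith) (by linarith)]
    linarith
  have hgap : 1 + d ^ 2 - b ^ 2 < 1 + d ^ 2 - a ^ 2 := by linarith
  rw [F_eq_neg_mul (by positivity) ha2.ne', F_eq_neg_mul (by positivity) (by linarith),
    neg_lt_neg_iff]
  exact mul_lt_mul' (mul_le_mul hfac hpole (div_nonneg (sq_nonneg b) (by linarith)) (sq_nonneg _))
    hgap (by linarith) (mul_pos (pow_pos (by linarith) 2) (div_pos (by positivity) (by linarith)))

theorem strictAntiOn_F_I₁ (hN : 0 ≤ N) : StrictAntiOn (F N d) (I₁ d) := by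
  have hmono : StrictMonoOn (F (-N) d) (I₂ d) :=
    strictMonoOn_F_I₂ (by nlinarith [Real.sqrt_nonneg (1 + d ^ 2)])
  intro a ha b hb hab
  rw [← neg_I₂, Set.mem_neg] at ha hb
  simpa only [F_neg, neg_neg] using hmono hb ha (neg_lt_neg hab)

theorem mul_sqrt_one_add_sq_le_one (hN : 0 < N) (hNd : d ^ 2 ≤ 1 / N ^ 2 - 1) :
    N * √(1 + d ^ 2) ≤ 1 := by
  refine (pow_le_one_iff_of_nonneg (by positivity) two_ne_zero).1 ?_
  calc (N * √(1 + d ^ 2)) ^ 2 = N ^ 2 * (1 + d ^ 2) := by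
        rw [mul_pow, Real.sq_sqrt (by positivity)]
    _ ≤ N ^ 2 * (1 / N ^ 2) := by gcongr; linarith
    _ = 1 := by field_simp

end Dispersion

/-- Proposition 1: for `0 < N < 1` and `d² ≤ N⁻² - 1`, the dispersion relation
`F(z) + A = 0` has exactly two real solutions with `z² ≠ 1`:
exactly one in `I₁` and exactly one in `I₂`. -/
theorem stmt_8 (N d A : ℝ) (hN : 0 < N) (hN1 : N < 1) (hd : 0 < d)
    (hcase : d ^ 2 ≤ 1 / N ^ 2 - 1) (hA : 0 < A) :
    {z : ℝ | z ^ 2 ≠ 1 ∧ F N d z + A = 0}.ncard = 2 ∧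
    (∃! z, z ∈ I₁ d ∧ F N d z + A = 0) ∧
    (∃! z, z ∈ I₂ d ∧ F N d z + A = 0) ∧
    (∀ z : ℝ, z ^ 2 ≠ 1 → F N d z + A = 0 → z ∈ I₁ d ∪ I₂ d) := by
  simp only [add_eq_zero_iff_eq_neg]
  have hloc : ∀ z, F N d z = -A → z ∈ I₁ d ∪ I₂ d := fun z hFz =>
    mem_I₁_union_I₂_iff.2 (one_lt_sq_and_sq_lt_of_F_neg (by linarith))
  have h₁ : ∃! z, z ∈ I₁ d ∧ F N d z = -A := (strictAntiOn_F_I₁ hN.le).injOn.existsUnique_of_exists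
    (exists_mem_I₁_F_eq hd.ne' (by linarith) (neg_lt_zero.2 hA))
  have h₂ : ∃! z, z ∈ I₂ d ∧ F N d z = -A :=
    (strictMonoOn_F_I₂ (mul_sqrt_one_add_sq_le_one hN hcase)).injOn.existsUnique_of_exists
      (exists_mem_I₂_F_eq hd.ne' hN1.ne (neg_lt_zero.2 hA))
  obtain ⟨x₁, ⟨hx₁, hFx₁⟩, huniq₁⟩ := h₁
  obtain ⟨x₂, ⟨hx₂, hFx₂⟩, huniq₂⟩ := h₂
  have hsq_ne : ∀ z ∈ I₁ d ∪ I₂ d, z ^ 2 ≠ 1 := fun z hz => (mem_I₁_union_I₂_iff.1 hz).1.ne'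
  have hset : {z : ℝ | z ^ 2 ≠ 1 ∧ F N d z = -A} = {x₁, x₂} := by
    ext z
    simp only [mem_ofPred_eq, mem_insert_iff, mem_singleton_iff]
    refine ⟨fun ⟨_, hFz⟩ => (hloc z hFz).imp (huniq₁ z ⟨·, hFz⟩) (huniq₂ z ⟨·, hFz⟩), ?_⟩
    rintro (rfl | rfl)
    exacts [⟨hsq_ne _ (Or.inl hx₁), hFx₁⟩, ⟨hsq_ne _ (Or.inr hx₂), hFx₂⟩]
  have hx₁₂ : x₁ < x₂ := (hx₁.2.trans (by norm_num)).trans hx₂.1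
  exact ⟨hset ▸ ncard_pair hx₁₂.ne, ⟨x₁, ⟨hx₁, hFx₁⟩, huniq₁⟩, ⟨x₂, ⟨hx₂, hFx₂⟩, huniq₂⟩,
    fun z _ => hloc z⟩
end
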